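/- Symmetric Drop theorem. In the abstract symmetrization framework with X carrying the norm ‖·‖_V, let B and C be nonempty closed subsets of S with B convex, B ⊆ X_{ℋ*}, B bounded, and d(B,C) := inf{‖b − c‖_V : b ∈ B, c ∈ C} > 0. Let x ∈ C be such that S' := Drop(x,B) ∩ C is closed, u^H ∈ S' for all u ∈ S' and H ∈ ℋ*, and u* ∈ S' for all u ∈ S'. Then for every sufficiently small ε > 0 (precisely, for all ε ∈ (0, ε₀] with ε₀ > 0 satisfying ε₀·diam(B) < (1−ε₀)·d(B,C)), there exists ξ_ε ∈ Drop(x,B) ∩ C such that Drop(ξ_ε, B) ∩ C = {ξ_ε} and ‖ξ_ε − ξ_ε*‖_V < ε. -/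

import Mathlib

/-!
Apply Ekeland's principle to `f = infDist · B` on the closed set `S' = Drop x B ∩ C`, but only
among the fixed points of the symmetrization: being a limit of iterated polarizations, `*` is
nonexpansive, idempotent and does not increase `f`, so any competitor `v` of an Ekeland point `ξ`
yields the symmetric competitor `v*`; hence `v* = ξ`, and then `f ξ ≤ f v` forces `v = ξ`.
Thus `ξ = ξ*`. For `v = ξ + t (b - ξ)` in the drop, convexity of `B` gives
`f v ≤ (1 - t) f ξ`, while `‖v - ξ‖ ≤ t (f ξ + diam B)`; the smallness of `ε` relative to
`d(B, C) ≤ f ξ` makes `v` an Ekeland competitor of `ξ`, so `v = ξ`.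
-/

open Filter Topology Metric Set

def Drop {X : Type*} [NormedAddCommGroup X] [NormedSpace ℝ X] (x : X) (B : Set X) : Set X :=
  {z : X | ∃ y ∈ B, ∃ t ∈ Set.Icc (0:ℝ) 1, z = x + t • (y - x)}

section Ekeland

variable {α : Type*} [MetricSpace α] {f : α → ℝ} {ε : ℝ}

variable (f ε) in
/-- The points `w` below `v` in the Brøndsted order of `f` with slope `ε`. -/
def ekelandSet (v : α) : Set α := {w | f w + ε * dist w v ≤ f v}

lemma mem_ekelandSet {v w : α} : w ∈ ekelandSet f ε v ↔ f w + ε * dist w v ≤ f v := Iff.rfl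

lemma self_mem_ekelandSet (v : α) : v ∈ ekelandSet f ε v := by
  simp [mem_ekelandSet]

lemma ekelandSet_subset (hε : 0 ≤ ε) {v w : α} (hw : w ∈ ekelandSet f ε v) :
    ekelandSet f ε w ⊆ ekelandSet f ε v := fun z hz => by
  simp only [mem_ekelandSet] at hw hz ⊢
  nlinarith [dist_triangle z w v]

lemma isClosed_ekelandSet (hf : LowerSemicontinuous f) (v : α) :
    IsClosed (ekelandSet f ε v) :=
  (hf.add (continuous_const.mul (continuous_id.dist continuous_const)).lowerSemicontinuous)
    |>.isClosed_preimage (f v)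

lemma exists_mem_ekelandSet_subset_closedBall (hf : BddBelow (range f)) (hε : 0 < ε) (v : α)
    {δ : ℝ} (hδ : 0 < δ) : ∃ w ∈ ekelandSet f ε v, ekelandSet f ε w ⊆ closedBall w (δ / ε) := by
  obtain ⟨_, ⟨w, hw, rfl⟩, hw_inf⟩ :=
    Real.lt_sInf_add_pos (s := f '' ekelandSet f ε v) ⟨f v, v, self_mem_ekelandSet v, rfl⟩ hδ
  refine ⟨w, hw, fun z hz => ?_⟩
  have hz_inf : sInf (f '' ekelandSet f ε v) ≤ f z :=
    csInf_le (hf.mono (image_subset_range _ _)) ⟨z, ekelandSet_subset hε.le hw hz, rfl⟩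
  simp only [mem_ekelandSet] at hz
  rw [mem_closedBall, le_div_iff₀' hε]
  linarith

theorem exists_ekelandSet_eq_singleton [CompleteSpace α] [Nonempty α]
    (hf : LowerSemicontinuous f) (hbdd : BddBelow (range f)) (hε : 0 < ε) :
    ∃ ξ, ekelandSet f ε ξ = {ξ} := by
  choose g hg hg_ball using fun v (n : ℕ) =>
    exists_mem_ekelandSet_subset_closedBall hbdd hε v (δ := (1 / 2) ^ n) (by positivity)
  let u : ℕ → α := fun n => Nat.rec (Classical.arbitrary α) (fun n v => g v n) n
  let K : ℕ → Set α := fun n => ekelandSet f ε (u (n + 1))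
  have hK_anti : Antitone K :=
    antitone_nat_of_succ_le fun n => ekelandSet_subset hε.le (hg _ _)
  have hK_bdd : ∀ n, Bornology.IsBounded (K n) := fun n =>
    isBounded_closedBall.subset (hg_ball _ _)
  have hK_diam : Tendsto (fun n => diam (K n)) atTop (𝓝 0) := by
    have h : Tendsto (fun n : ℕ => 2 * ((1 / 2 : ℝ) ^ n / ε)) atTop (𝓝 0) := by
      simpa using ((tendsto_pow_atTop_nhds_zero_of_lt_one (r := (1 / 2 : ℝ)) (by norm_num)
        (by norm_num)).div_const ε).const_mul 2
    refine squeeze_zero (fun n => diam_nonneg) (fun n => ?_) h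
    exact (diam_mono (hg_ball _ _) isBounded_closedBall).trans (diam_closedBall (by positivity))
  obtain ⟨ξ, hξ⟩ := nonempty_iInter_of_nonempty_biInter (fun n => isClosed_ekelandSet hf _)
    hK_bdd (fun N => ⟨u (N + 1), mem_iInter₂.2 fun n hn => hK_anti hn (self_mem_ekelandSet _)⟩)
    hK_diam
  rw [mem_iInter] at hξ
  refine ⟨ξ, eq_singleton_iff_unique_mem.2 ⟨self_mem_ekelandSet ξ, fun v hv => ?_⟩⟩
  have hvξ : dist v ξ ≤ 0 := ge_of_tendsto' hK_diam fun n =>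
    dist_le_diam_of_mem (hK_bdd n) (ekelandSet_subset hε.le (hξ n) hv) (hξ n)
  exact dist_le_zero.1 hvξ

theorem exists_isFixedPt_ekelandSet_inter_eq_singleton [CompleteSpace α] {s : Set α}
    (hs : IsClosed s) (hs_ne : s.Nonempty) (hf : LowerSemicontinuous f)
    (hbdd : BddBelow (f '' s)) {σ : α → α} (hσs : MapsTo σ s s)
    (hσ_dist : ∀ u ∈ s, ∀ v ∈ s, dist (σ u) (σ v) ≤ dist u v)
    (hσσ : ∀ u ∈ s, σ (σ u) = σ u) (hfσ : ∀ u ∈ s, f (σ u) ≤ f u) (hε : 0 < ε) :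
    ∃ ξ ∈ s, Function.IsFixedPt σ ξ ∧ ekelandSet f ε ξ ∩ s = {ξ} := by
  have hσ_cont : ContinuousOn σ s :=
    (LipschitzOnWith.of_dist_le_mul (K := 1) (by simpa using hσ_dist)).continuousOn
  -- the fixed points of `σ` in `s`
  let F := s ∩ (fun u => (σ u, u)) ⁻¹' diagonal α
  have : IsClosed F := (hσ_cont.prodMk continuousOn_id).preimage_isClosed_of_isClosed hs
    isClosed_diagonal
  have : CompleteSpace F := IsClosed.completeSpace_coe
  obtain ⟨x₀, hx₀⟩ := hs_ne
  have : Nonempty F := ⟨⟨σ x₀, hσs hx₀, hσσ x₀ hx₀⟩⟩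
  have hfF : LowerSemicontinuous (f ∘ ((↑) : F → α)) :=
    lowerSemicontinuous_iff_isClosed_preimage.2 fun y =>
      (hf.isClosed_preimage y).preimage continuous_subtype_val
  obtain ⟨⟨ξ, hξs, hξσ⟩, hξ⟩ := exists_ekelandSet_eq_singleton hfF
    (hbdd.mono (by rintro _ ⟨u, rfl⟩; exact ⟨u, u.2.1, rfl⟩)) hε
  refine ⟨ξ, hξs, hξσ, eq_singleton_iff_unique_mem.2 ⟨⟨self_mem_ekelandSet ξ, hξs⟩, ?_⟩⟩
  rintro v ⟨hv, hvs⟩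
  have hσv : σ v ∈ ekelandSet f ε ξ := by
    have := hσ_dist v hvs ξ hξs
    rw [show σ ξ = ξ from hξσ] at this
    simp only [mem_ekelandSet] at hv ⊢
    nlinarith [hfσ v hvs]
  have hσv_eq : σ v = ξ := congrArg Subtype.val
    (hξ.subset (show (⟨σ v, hσs hvs, hσσ v hvs⟩ : F) ∈ _ from hσv))
  have hvξ : ε * dist v ξ ≤ 0 := by
    have := hfσ v hvs
    rw [hσv_eq] at this
    rw [mem_ekelandSet] at hv
    linarith
  exact dist_le_zero.1 (nonpos_of_mul_nonpos_right hvξ hε)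

end Ekeland

section Drop

variable {X : Type*} [NormedAddCommGroup X] [NormedSpace ℝ X] {x : X} {B : Set X}

lemma drop_eq_convexJoin (x : X) (B : Set X) : Drop x B = convexJoin ℝ {x} B := by
  ext z
  simp [Drop, convexJoin_singleton_left, segment_eq_image', eq_comm]

lemma mem_drop_self (hB : B.Nonempty) : x ∈ Drop x B := by
  rw [drop_eq_convexJoin]
  exact subset_convexJoin_left hB (mem_singleton x)

lemma drop_subset_of_mem (hB : Convex ℝ B) {z : X} (hz : z ∈ Drop x B) :
    Drop z B ⊆ Drop x B := by
  simp only [drop_eq_convexJoin] at hz ⊢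
  exact convexJoin_subset (singleton_subset_iff.2 hz)
    (subset_convexJoin_right (singleton_nonempty x)) ((convex_singleton x).convexJoin hB)

lemma infDist_add_smul_sub_le (hB : Convex ℝ B) {b : X} (hb : b ∈ B) {t : ℝ}
    (ht : t ∈ Icc (0 : ℝ) 1) : infDist (x + t • (b - x)) B ≤ (1 - t) * infDist x B := by
  refine le_of_forall_pos_le_add fun δ hδ => ?_
  obtain ⟨b', hb', hxb'⟩ := (infDist_lt_iff ⟨b, hb⟩).1 (lt_add_of_pos_right (infDist x B) hδ)
  have h1t : 0 ≤ 1 - t := sub_nonneg.2 ht.2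
  calc infDist (x + t • (b - x)) B
      ≤ dist (x + t • (b - x)) ((1 - t) • b' + t • b) :=
        infDist_le_dist_of_mem (hB hb' hb h1t ht.1 (by ring))
    _ = (1 - t) * dist x b' := by
        rw [dist_eq_norm, dist_eq_norm, ← norm_smul_of_nonneg h1t]
        congr 1
        module
    _ ≤ (1 - t) * (infDist x B + δ) := by gcongr
    _ ≤ (1 - t) * infDist x B + δ := by nlinarith [ht.1]

lemma mem_ekelandSet_infDist_of_mem_drop (hB : Convex ℝ B) (hB_bdd : Bornology.IsBounded B)
    {ε : ℝ} (hε : 0 ≤ ε) (hx : ε * (infDist x B + diam B) ≤ infDist x B) {v : X}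
    (hv : v ∈ Drop x B) : v ∈ ekelandSet (infDist · B) ε x := by
  obtain ⟨b, hb, t, ht, rfl⟩ := hv
  have hdist : dist (x + t • (b - x)) x = t * dist x b := by
    rw [dist_eq_norm, dist_eq_norm, add_sub_cancel_left, norm_smul_of_nonneg ht.1, norm_sub_rev]
  have hxb : ε * dist x b ≤ infDist x B :=
    (mul_le_mul_of_nonneg_left (dist_le_infDist_add_diam hB_bdd hb) hε).trans hx
  rw [mem_ekelandSet, hdist]
  nlinarith [infDist_add_smul_sub_le (x := x) hB hb ht, ht.1]

end Drop

section Polarization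

variable {α P : Type*} {pol : α → P → α} {S : Set α}

lemma dist_foldl_le [PseudoMetricSpace α] (hS : ∀ u ∈ S, ∀ H, pol u H ∈ S)
    (hpol : ∀ u ∈ S, ∀ v ∈ S, ∀ H, dist (pol u H) (pol v H) ≤ dist u v) :
    ∀ (l : List P), ∀ u ∈ S, ∀ v ∈ S, dist (l.foldl pol u) (l.foldl pol v) ≤ dist u v
  | [], _, _, _, _ => le_rfl
  | H :: l, u, hu, v, hv =>
    (dist_foldl_le hS hpol l _ (hS u hu H) _ (hS v hv H)).trans (hpol u hu v hv H)

lemma foldl_le {f : α → ℝ} (hS : ∀ u ∈ S, ∀ H, pol u H ∈ S)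
    (hf : ∀ u ∈ S, ∀ H, f (pol u H) ≤ f u) : ∀ (l : List P), ∀ u ∈ S, f (l.foldl pol u) ≤ f u
  | [], _, _ => le_rfl
  | H :: l, u, hu => (foldl_le hS hf l _ (hS u hu H)).trans (hf u hu H)

variable {σ : α → α} {L : ℕ → List P}

lemma dist_le_of_tendsto_foldl [PseudoMetricSpace α]
    (hσ : ∀ u ∈ S, Tendsto (fun m => (L m).foldl pol u) atTop (𝓝 (σ u)))
    (hS : ∀ u ∈ S, ∀ H, pol u H ∈ S)
    (hpol : ∀ u ∈ S, ∀ v ∈ S, ∀ H, dist (pol u H) (pol v H) ≤ dist u v) {u v : α} (hu : u ∈ S)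
    (hv : v ∈ S) : dist (σ u) (σ v) ≤ dist u v :=
  le_of_tendsto ((hσ u hu).dist (hσ v hv))
    (Eventually.of_forall fun m => dist_foldl_le hS hpol (L m) u hu v hv)

lemma le_of_tendsto_foldl [TopologicalSpace α]
    (hσ : ∀ u ∈ S, Tendsto (fun m => (L m).foldl pol u) atTop (𝓝 (σ u)))
    {f : α → ℝ} (hf_cont : Continuous f) (hS : ∀ u ∈ S, ∀ H, pol u H ∈ S)
    (hf : ∀ u ∈ S, ∀ H, f (pol u H) ≤ f u) {u : α} (hu : u ∈ S) : f (σ u) ≤ f u :=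
  le_of_tendsto ((hf_cont.tendsto _).comp (hσ u hu))
    (Eventually.of_forall fun m => foldl_le hS hf (L m) u hu)

lemma eq_of_tendsto_foldl_of_forall_pol_eq [TopologicalSpace α] [T2Space α]
    (hσ : ∀ u ∈ S, Tendsto (fun m => (L m).foldl pol u) atTop (𝓝 (σ u)))
    {u : α} (hu : u ∈ S) (hfix : ∀ H, pol u H = u) :
    σ u = u :=
  tendsto_nhds_unique (hσ u hu) ((tendsto_const_nhds (x := u)).congr fun m =>
    (List.foldl_fixed' hfix (L m)).symm)

end Polarization

lemma infDist_le_infDist_of_forall_dist_le {α : Type*} [PseudoMetricSpace α] {B : Set α}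
    (hB : B.Nonempty) {x y : α} (h : ∀ b ∈ B, dist y b ≤ dist x b) :
    infDist y B ≤ infDist x B :=
  (le_infDist hB).2 fun b hb => (infDist_le_dist_of_mem hb).trans (h b hb)

lemma sInf_norm_sub_le_infDist {X : Type*} [NormedAddCommGroup X] {B C : Set X}
    (hB : B.Nonempty) {c : X} (hc : c ∈ C) :
    sInf ((fun q : X × X => ‖q.1 - q.2‖) '' B ×ˢ C) ≤ infDist c B :=
  (le_infDist hB).2 fun b hb => by
    rw [dist_comm, dist_eq_norm]
    exact csInf_le ⟨0, by rintro _ ⟨q, -, rfl⟩; exact norm_nonneg _⟩ ⟨(b, c), ⟨hb, hc⟩, rfl⟩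

theorem symmetric_drop_general
    {X : Type*} [NormedAddCommGroup X] [NormedSpace ℝ X] [CompleteSpace X]
    (S : Set X)
    {P : Type*}
    (pol : X → P → X) (sy : X → X)
    (hpolS : ∀ u ∈ S, ∀ H : P, pol u H ∈ S)
    (hsyS : ∀ u : X, sy u ∈ S)
    (hsypol : ∀ u ∈ S, ∀ H : P,
      pol (sy u) H = sy u ∧ sy (pol u H) = sy u ∧ pol (pol u H) H = pol u H)
    (happrox : ∃ Hs : ℕ → P, ∀ u ∈ S,
      Filter.Tendsto (fun m => List.foldl pol u ((List.range m).map Hs))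
        Filter.atTop (nhds (sy u)))
    (hpolContr : ∀ u ∈ S, ∀ v ∈ S, ∀ H : P, ‖pol u H - pol v H‖ ≤ ‖u - v‖)
    (B C : Set X) (hBne : B.Nonempty)
    (hBS : B ⊆ S) (hCS : C ⊆ S)
    (hBconv : Convex ℝ B) (hBbdd : Bornology.IsBounded B)
    (hBH : ∀ b ∈ B, ∀ H : P, pol b H = b)
    (dBC : ℝ) (hdBC : dBC = sInf ((fun q : X × X => ‖q.1 - q.2‖) '' B ×ˢ C))
    (hdpos : 0 < dBC)
    (x : X) (hx : x ∈ C)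
    (hS'closed : IsClosed (Drop x B ∩ C))
    (hS'sy : ∀ u ∈ Drop x B ∩ C, sy u ∈ Drop x B ∩ C)
    (ε₀ : ℝ) (hε₀small : ε₀ * Metric.diam B < (1 - ε₀) * dBC) :
    ∀ ε ∈ Set.Ioc (0:ℝ) ε₀,
      ∃ ξ ∈ Drop x B ∩ C, Drop ξ B ∩ C = {ξ} ∧ ‖ξ - sy ξ‖ < ε := by
  rintro ε ⟨hε, hεε₀⟩
  obtain ⟨Hs, hsy⟩ := happrox
  have hpol_dist : ∀ u ∈ S, ∀ v ∈ S, ∀ H, dist (pol u H) (pol v H) ≤ dist u v := by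
    simpa only [dist_eq_norm] using hpolContr
  have hpol_infDist : ∀ u ∈ S, ∀ H, infDist (pol u H) B ≤ infDist u B := fun u hu H =>
    infDist_le_infDist_of_forall_dist_le hBne fun b hb => by
      simpa only [hBH b hb H] using hpol_dist u hu b (hBS hb) H
  have hS' : Drop x B ∩ C ⊆ S := fun u hu => hCS hu.2
  have hf_cont : Continuous (infDist · B) := continuous_infDist_pt B
  obtain ⟨ξ, hξ, hξ_fix, hξ_min⟩ := exists_isFixedPt_ekelandSet_inter_eq_singleton hS'closed
    ⟨x, mem_drop_self hBne, hx⟩ hf_cont.lowerSemicontinuous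
    ⟨0, by rintro _ ⟨u, -, rfl⟩; exact infDist_nonneg⟩ hS'sy
    (fun u hu v hv => dist_le_of_tendsto_foldl hsy hpolS hpol_dist (hS' hu) (hS' hv))
    (fun u hu => eq_of_tendsto_foldl_of_forall_pol_eq hsy (hsyS u) fun H =>
      (hsypol u (hS' hu) H).1)
    (fun u hu => le_of_tendsto_foldl hsy hf_cont hpolS hpol_infDist (hS' hu)) hε
  refine ⟨ξ, hξ, ?_, by rwa [hξ_fix.eq, sub_self, norm_zero]⟩
  have hε_small : ε * (infDist ξ B + diam B) ≤ infDist ξ B := by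
    have hdBC_le : dBC ≤ infDist ξ B := hdBC ▸ sInf_norm_sub_le_infDist hBne hξ.2
    have hε₀_lt : ε₀ < 1 := by nlinarith [mul_nonneg (hε.le.trans hεε₀) (diam_nonneg (s := B))]
    nlinarith [mul_le_mul_of_nonneg_right hεε₀ (diam_nonneg (s := B)),
      mul_le_mul_of_nonneg_left hdBC_le (sub_nonneg.2 (hεε₀.trans hε₀_lt.le))]
  refine eq_singleton_iff_unique_mem.2 ⟨⟨mem_drop_self hBne, hξ.2⟩, fun v hv => ?_⟩
  exact hξ_min.subset ⟨mem_ekelandSet_infDist_of_mem_drop hBconv hBbdd hε.le hε_small hv.1,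
    drop_subset_of_mem hBconv hξ.1 hv.1, hv.2⟩

theorem symmetric_drop
    {X : Type*} [NormedAddCommGroup X] [NormedSpace ℝ X] [CompleteSpace X]
    (S : Set X)
    {P : Type*} [TopologicalSpace P] [PathConnectedSpace P]
    (pol : X → P → X) (sy : X → X)
    (hpolS : ∀ u ∈ S, ∀ H : P, pol u H ∈ S)
    (hsyS : ∀ u : X, sy u ∈ S)
    (hpolCont : ContinuousOn (fun q : X × P => pol q.1 q.2) (S ×ˢ Set.univ))
    (hsypol : ∀ u ∈ S, ∀ H : P,
      pol (sy u) H = sy u ∧ sy (pol u H) = sy u ∧ pol (pol u H) H = pol u H)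
    (happrox : ∃ Hs : ℕ → P, ∀ u ∈ S,
      Filter.Tendsto (fun m => List.foldl pol u ((List.range m).map Hs))
        Filter.atTop (nhds (sy u)))
    (hpolContr : ∀ u ∈ S, ∀ v ∈ S, ∀ H : P, ‖pol u H - pol v H‖ ≤ ‖u - v‖)
    (Θ : X → X) (CΘ : ℝ) (hCΘ : 0 < CΘ)
    (hΘS : ∀ u : X, Θ u ∈ S) (hΘid : ∀ u ∈ S, Θ u = u)
    (hΘlip : ∀ u v : X, ‖Θ u - Θ v‖ ≤ CΘ * ‖u - v‖)
    (hpolext : ∀ u : X, ∀ H : P, pol u H = pol (Θ u) H)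
    (hsyext : ∀ u : X, sy u = sy (Θ u))
    (B C : Set X) (hBne : B.Nonempty) (hCne : C.Nonempty)
    (hBS : B ⊆ S) (hCS : C ⊆ S) (hBclosed : IsClosed B) (hCclosed : IsClosed C)
    (hBconv : Convex ℝ B) (hBbdd : Bornology.IsBounded B)
    (hBH : ∀ b ∈ B, ∀ H : P, pol b H = b)
    (dBC : ℝ) (hdBC : dBC = sInf ((fun q : X × X => ‖q.1 - q.2‖) '' B ×ˢ C))
    (hdpos : 0 < dBC)
    (x : X) (hx : x ∈ C)
    (hS'closed : IsClosed (Drop x B ∩ C))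
    (hS'pol : ∀ u ∈ Drop x B ∩ C, ∀ H : P, pol u H ∈ Drop x B ∩ C)
    (hS'sy : ∀ u ∈ Drop x B ∩ C, sy u ∈ Drop x B ∩ C)
    (ε₀ : ℝ) (hε₀ : 0 < ε₀) (hε₀small : ε₀ * Metric.diam B < (1 - ε₀) * dBC) :
    ∀ ε ∈ Set.Ioc (0:ℝ) ε₀,
      ∃ ξ ∈ Drop x B ∩ C, Drop ξ B ∩ C = {ξ} ∧ ‖ξ - sy ξ‖ < ε :=
  symmetric_drop_general S pol sy hpolS hsyS hsypol happrox hpolContr B C hBne hBS hCS hBconv hBbdd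
    hBH dBC hdBC hdpos x hx hS'closed hS'sy ε₀ hε₀small
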